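/- arXiv:2003.04450 — 4 statements merged into one kernel-verified Lean document; each statement's English description precedes it below -/
import Mathlib

section
/- Let H be a triangle-free simple graph, let k ≥ 2, and let C be a cycle of odd length 2k+1 in H such that H contains no odd cycle of length shorter than 2k+1. Then every vertex of H that does not lie on C is adjacent to at most 2 vertices of C. -/
/-!
Rotate `C` so that it starts at a neighbour `x` of `u`. For any other neighbour of `u` on `C`,
one of the two arcs of `C` joining it to `x` is odd, and closing that arc through `u` gives an odd
cycle two edges longer than the arc. Minimality of `C` forces the complementary even arc to have
length `2`, so every other neighbour sits at position `2` or `2k - 1`. Two such neighbours at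
positions `2` and `2k - 1` are joined by an odd arc of length `2k - 3`, which closes through `u`
to an odd cycle of length `2k - 1 < 2k + 1`.
-/

namespace SimpleGraph.Walk

variable {V : Type*} {G : SimpleGraph V}

lemma IsPath.isCycle_cons_concat {u a b : V} {p : G.Walk a b} (hp : p.IsPath)
    (hu : u ∉ p.support) (ha : G.Adj u a) (hb : G.Adj b u) (hab : a ≠ b) :
    (cons ha (p.concat hb)).IsCycle := by
  refine (cons_isCycle_iff _ _).mpr ⟨hp.concat hu hb, fun he => ?_⟩
  rw [edges_concat, List.concat_eq_append, List.mem_append, List.mem_singleton] at he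
  rcases he with he | he
  · exact hu (fst_mem_support_of_mem_edges p he)
  · rcases Sym2.eq_iff.mp he with ⟨rfl, -⟩ | ⟨-, rfl⟩
    · exact hu p.end_mem_support
    · exact hab rfl

lemma IsPath.le_length_add_two {n : ℕ}
    (hshort : ∀ (w : V) (c : G.Walk w w), c.IsCycle → Odd c.length → n ≤ c.length)
    {u a b : V} {p : G.Walk a b} (hp : p.IsPath) (hodd : Odd p.length) (hu : u ∉ p.support)
    (ha : G.Adj u a) (hb : G.Adj u b) (hab : a ≠ b) : n ≤ p.length + 2 := by
  simpa using hshort u _ (hp.isCycle_cons_concat hu ha hb.symm hab) (by simpa [Nat.odd_add_one])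

lemma exists_getVert_eq_of_mem_support_of_ne {x y : V} {c : G.Walk x x} (hy : y ∈ c.support)
    (hyx : y ≠ x) : ∃ i, 0 < i ∧ i < c.length ∧ c.getVert i = y := by
  obtain ⟨i, rfl, hi⟩ := mem_support_iff_exists_getVert.mp hy
  refine ⟨i, Nat.pos_of_ne_zero ?_, lt_of_le_of_ne hi ?_, rfl⟩ <;> rintro rfl <;> simp at hyx

variable {n : ℕ} {x u : V} {c : G.Walk x x}

lemma IsCycle.le_sub_add_two_of_adj_getVert (hc : c.IsCycle)
    (hshort : ∀ (w : V) (c' : G.Walk w w), c'.IsCycle → Odd c'.length → n ≤ c'.length)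
    (hu : u ∉ c.support) {i j : ℕ} (hij : i < j) (hjc : j < c.length) (hodd : Odd (j - i))
    (hi : G.Adj u (c.getVert i)) (hj : G.Adj u (c.getVert j)) : n ≤ j - i + 2 := by
  have harc : ((c.take j).drop i).length = j - i := by
    rw [drop_length, take_length, min_eq_left hjc.le]
  have hstart : (c.take j).getVert i = c.getVert i := by
    rw [take_getVert, min_eq_right hij.le]
  have hne : c.getVert i ≠ c.getVert j := fun h =>
    hij.ne (hc.getVert_injOn' (by simp; omega) (by simp; omega) h)
  have hsupp : u ∉ ((c.take j).drop i).support := fun h =>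
    hu (((isSubwalk_drop _ i).trans (isSubwalk_take c j)).support_subset h)
  rw [← harc]
  exact ((hc.isPath_take hjc).drop i).le_length_add_two hshort (harc ▸ hodd) hsupp
    (hstart ▸ hi) hj (hstart ▸ hne)

lemma IsCycle.eq_two_or_eq_length_sub_two_of_adj_getVert (hc : c.IsCycle)
    (hshort : ∀ (w : V) (c' : G.Walk w w), c'.IsCycle → Odd c'.length → c.length ≤ c'.length)
    (hodd : Odd c.length) (hu : u ∉ c.support) (hx : G.Adj u x) {i : ℕ} (hi0 : 0 < i)
    (hic : i < c.length) (hi : G.Adj u (c.getVert i)) : i = 2 ∨ i = c.length - 2 := by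
  rcases Nat.even_or_odd i with heven | hiodd
  · -- the arc from `c.getVert i` back to `x` is odd; read it forwards along `c.reverse`
    have hrev := hc.reverse.le_sub_add_two_of_adj_getVert hshort (by simpa using hu)
      (i := 0) (j := c.length - i) (by omega) (by simp; omega)
      (by rw [Nat.sub_zero, Nat.odd_sub hic.le]; simp [hodd, heven])
      (by simpa using hx) (by simpa [getVert_reverse, Nat.sub_sub_self hic.le] using hi)
    obtain ⟨m, rfl⟩ := heven
    omega
  · have := hc.le_sub_add_two_of_adj_getVert hshort hu hi0 hic (by simpa using hiodd)
      (by simpa using hx) hi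
    obtain ⟨m, rfl⟩ := hiodd
    obtain ⟨l, hl⟩ := hodd
    omega

lemma IsCycle.not_adj_getVert_two_and_length_sub_two (hc : c.IsCycle)
    (hshort : ∀ (w : V) (c' : G.Walk w w), c'.IsCycle → Odd c'.length → c.length ≤ c'.length)
    (hodd : Odd c.length) (h5 : 5 ≤ c.length) (hu : u ∉ c.support) :
    ¬(G.Adj u (c.getVert 2) ∧ G.Adj u (c.getVert (c.length - 2))) := by
  rintro ⟨h2, hl⟩
  have := hc.le_sub_add_two_of_adj_getVert hshort hu (by omega) (by omega)
    (by obtain ⟨l, hl⟩ := hodd; exact ⟨l - 2, by omega⟩) h2 hl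
  omega

end SimpleGraph.Walk

open SimpleGraph.Walk in
theorem shortest_odd_cycle_few_neighbors_general {V : Type*} [DecidableEq V]
    (H : SimpleGraph V) [DecidableRel H.Adj]
    (k : ℕ) (hk : 2 ≤ k) (v : V) (c : H.Walk v v)
    (hc : c.IsCycle) (hlen : c.length = 2 * k + 1)
    (hshort : ∀ (w : V) (c' : H.Walk w w), c'.IsCycle → Odd c'.length →
      2 * k + 1 ≤ c'.length)
    (u : V) (hu : u ∉ c.support) :
    (c.support.toFinset.filter (fun x => H.Adj u x)).card ≤ 2 := by
  by_contra! hcard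
  obtain ⟨x, hx, y, hy, z, hz, hxy, hxz, hyz⟩ := Finset.two_lt_card.mp hcard
  simp only [Finset.mem_filter, List.mem_toFinset] at hx hy hz
  set D := c.rotate x hx.1
  have hD : D.IsCycle := hc.rotate hx.1
  have hDlen : D.length = 2 * k + 1 := by simp [D, hlen]
  have hDodd : Odd D.length := hDlen ▸ odd_two_mul_add_one k
  have hshortD := hDlen ▸ hshort
  have huD : u ∉ D.support := by simpa [D] using hu
  have hposition {y : V} (hyc : y ∈ c.support) (hyx : x ≠ y) (huy : H.Adj u y) :
      ∃ i, (i = 2 ∨ i = D.length - 2) ∧ D.getVert i = y := by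
    obtain ⟨i, hi0, hiD, rfl⟩ :=
      exists_getVert_eq_of_mem_support_of_ne (c := D) (by simpa [D] using hyc) hyx.symm
    exact ⟨i, hD.eq_two_or_eq_length_sub_two_of_adj_getVert hshortD hDodd huD hx.2 hi0 hiD huy,
      rfl⟩
  obtain ⟨i, hi | hi, rfl⟩ := hposition hy.1 hxy hy.2 <;>
  obtain ⟨j, hj | hj, rfl⟩ := hposition hz.1 hxz hz.2 <;> subst hi hj
  · exact hyz rfl
  · exact hD.not_adj_getVert_two_and_length_sub_two hshortD hDodd (by omega) huD ⟨hy.2, hz.2⟩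
  · exact hD.not_adj_getVert_two_and_length_sub_two hshortD hDodd (by omega) huD ⟨hz.2, hy.2⟩
  · exact hyz rfl

/-- If `H` is triangle-free, `k ≥ 2`, and `C` is a shortest odd cycle of `H`, of length `2k+1`,
then every vertex of `H` not on `C` is adjacent to at most `2` vertices of `C`. -/
theorem shortest_odd_cycle_few_neighbors {V : Type*} [Fintype V] [DecidableEq V]
    (H : SimpleGraph V) [DecidableRel H.Adj] (hH : H.CliqueFree 3)
    (k : ℕ) (hk : 2 ≤ k) (v : V) (c : H.Walk v v)
    (hc : c.IsCycle) (hlen : c.length = 2 * k + 1)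
    (hshort : ∀ (w : V) (c' : H.Walk w w), c'.IsCycle → Odd c'.length →
      2 * k + 1 ≤ c'.length)
    (u : V) (hu : u ∉ c.support) :
    (c.support.toFinset.filter (fun x => H.Adj u x)).card ≤ 2 :=
  shortest_odd_cycle_few_neighbors_general H k hk v c hc hlen hshort u hu
end

section
/- Let H be a triangle-free simple graph on m vertices, let k ≥ 2, and suppose the shortest odd cycle of H has length 2k+1 (in particular m ≥ 2k+1). Then the number of edges of H is at most (2k+1) + 2(m − 2k − 1) + ⌊((m − 2k − 1)/2)²⌋, i.e., e(H) ≤ (2k+1) + 2(m−2k−1) + ⌊(m−2k−1)²/4⌋. -/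
open SimpleGraph Finset

namespace EBH

variable {V : Type*} {G : SimpleGraph V}

lemma sym2_getVert_mem_edges {a b : V} (w : G.Walk a b) :
    ∀ i, i < w.length → s(w.getVert i, w.getVert (i+1)) ∈ w.edges := by
  induction w with
  | nil => simp
  | cons h p ih =>
    intro i hi
    cases i with
    | zero => simp [SimpleGraph.Walk.getVert_zero, SimpleGraph.Walk.getVert_cons_succ]
    | succ n =>
      rw [SimpleGraph.Walk.getVert_cons_succ, SimpleGraph.Walk.getVert_cons_succ]
      exact List.mem_cons_of_mem _ (ih n (by simpa using hi))

lemma eq_sym2_of_mem_edges {a b : V} (w : G.Walk a b) {e : Sym2 V} (he : e ∈ w.edges) :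
    ∃ i < w.length, e = s(w.getVert i, w.getVert (i+1)) := by
  induction w with
  | nil => simp at he
  | cons h p ih =>
    rw [SimpleGraph.Walk.edges_cons, List.mem_cons] at he
    rcases he with he | he
    · exact ⟨0, by simp, by simpa [SimpleGraph.Walk.getVert_zero,
        SimpleGraph.Walk.getVert_cons_succ] using he⟩
    · obtain ⟨i, hi, hei⟩ := ih he
      exact ⟨i+1, by simpa using Nat.succ_lt_succ hi,
        by simpa [SimpleGraph.Walk.getVert_cons_succ] using hei⟩

lemma exists_arc {a b : V} (w : G.Walk a b) (i : ℕ) :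
    ∀ j, i ≤ j → j ≤ w.length →
      ∃ p : G.Walk (w.getVert i) (w.getVert j), p.length = j - i := by
  intro j hij
  induction j, hij using Nat.le_induction with
  | base => exact fun _ => ⟨SimpleGraph.Walk.nil, by simp⟩
  | succ j hij ih =>
    intro hj
    obtain ⟨p, hp⟩ := ih (by omega)
    exact ⟨p.concat (w.adj_getVert_succ (by omega)), by
      rw [SimpleGraph.Walk.length_concat, hp]; omega⟩

lemma getVert_eq_support_getElem_aux {a b : V} (w : G.Walk a b) :
    ∀ i (hi : i ≤ w.length), w.getVert i = w.support[i]'(by simp [SimpleGraph.Walk.length_support]; omega) := by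
  induction w with
  | nil =>
    intro i hi
    simp only [SimpleGraph.Walk.length_nil, Nat.le_zero] at hi
    subst hi; simp
  | cons h p ih =>
    intro i hi
    cases i with
    | zero => simp
    | succ n =>
      rw [SimpleGraph.Walk.getVert_cons_succ]
      simp only [SimpleGraph.Walk.support_cons, List.getElem_cons_succ]
      exact ih n (by simpa using hi)

lemma getVert_eq_support_getElem' {a b : V} (w : G.Walk a b)
    {i : ℕ} (hi : i ≤ w.length) :
    w.getVert i = w.support[i]'(by simp [SimpleGraph.Walk.length_support]; omega) :=
  getVert_eq_support_getElem_aux w i hi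

section
variable {V : Type*} [DecidableEq V] {G : SimpleGraph V}

lemma getVert_inj_of_support_nodup {a b : V} (w : G.Walk a b)
    (hnd : w.support.Nodup) {i j : ℕ} (hi : i ≤ w.length) (hj : j ≤ w.length)
    (h : w.getVert i = w.getVert j) : i = j := by
  rw [getVert_eq_support_getElem' w hi, getVert_eq_support_getElem' w hj] at h
  exact (List.Nodup.getElem_inj_iff hnd).mp h

/-- Any closed walk of odd length contains an odd cycle of length at most the walk's length. -/
lemma exists_odd_cycle : ∀ n {v : V} (w : G.Walk v v), w.length = n → Odd n →
    ∃ (u : V) (c : G.Walk u u), c.IsCycle ∧ Odd c.length ∧ c.length ≤ n := by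
  intro n
  induction n using Nat.strong_induction_on with
  | _ n ih =>
    intro v w hw hodd
    cases w with
    | nil =>
      rw [Nat.odd_iff] at hodd
      simp only [SimpleGraph.Walk.length_nil] at hw
      omega
    | cons h q =>
      rename_i x
      by_cases hq0 : q.length = 0
      · exact absurd (SimpleGraph.Walk.eq_of_length_eq_zero hq0 ▸ h) (G.irrefl)
      by_cases hnd : q.support.Nodup
      · -- w itself is a cycle
        refine ⟨v, Walk.cons h q, ?_, hw ▸ hodd, le_of_eq hw⟩
        rw [SimpleGraph.Walk.cons_isCycle_iff]
        refine ⟨SimpleGraph.Walk.isPath_def _ |>.mpr hnd, fun hmem => ?_⟩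
        obtain ⟨i, hi, hei⟩ := eq_sym2_of_mem_edges q hmem
        rw [Sym2.eq_iff] at hei
        have h0 : q.getVert 0 = x := q.getVert_zero
        have hL : q.getVert q.length = v := q.getVert_length
        rcases hei with ⟨h1, h2⟩ | ⟨h1, h2⟩
        · -- v = getVert i, x = getVert (i+1)
          have := getVert_inj_of_support_nodup q hnd (le_of_lt hi) le_rfl (h1.symm.trans hL.symm)
          omega
        · -- v = getVert (i+1), x = getVert i
          have e1 := getVert_inj_of_support_nodup q hnd (by omega) le_rfl (h1.symm.trans hL.symm)
          have e2 := getVert_inj_of_support_nodup q hnd (by omega) (Nat.zero_le _) (h2.symm.trans h0.symm)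
          have hn2 : n = q.length + 1 := by rw [← hw]; simp
          rw [Nat.odd_iff] at hodd
          omega
      · -- find a repeated vertex and split
        obtain ⟨u, hu⟩ := List.exists_duplicate_iff_not_nodup.mpr hnd
        rw [List.duplicate_iff_two_le_count] at hu
        have humem : u ∈ q.support := List.count_pos_iff.mp (by omega)
        have hsplit := q.take_spec humem
        have hcount1 := q.count_support_takeUntil_eq_one humem
        have hutail : u ∈ (q.dropUntil u humem).support.tail := by
          have : q.support.count u =
              (q.takeUntil u humem).support.count u
              + (q.dropUntil u humem).support.tail.count u := by
            conv_lhs => rw [← hsplit]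
            rw [SimpleGraph.Walk.support_append, List.count_append]
          rw [hcount1] at this
          have : 1 ≤ (q.dropUntil u humem).support.tail.count u := by omega
          exact List.count_pos_iff.mp (by omega)
        -- dropUntil is not nil
        cases hdrop : q.dropUntil u humem with
        | nil => rw [hdrop] at hutail; simp at hutail
        | cons h2 r =>
          rename_i y
          rw [hdrop] at hutail
          simp only [SimpleGraph.Walk.support_cons, List.tail_cons] at hutail
          -- loop at u
          set loop : G.Walk u u := Walk.cons h2 (r.takeUntil u hutail) with hloop
          set rest : G.Walk v v :=
            Walk.cons h ((q.takeUntil u humem).append (r.dropUntil u hutail)) with hrest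
          have hlenr : (r.takeUntil u hutail).length + (r.dropUntil u hutail).length
              = r.length := by
            conv_rhs => rw [← r.take_spec hutail]
            rw [SimpleGraph.Walk.length_append]
          have hlenq : (q.takeUntil u humem).length + (q.dropUntil u humem).length
              = q.length := by
            conv_rhs => rw [← hsplit]
            rw [SimpleGraph.Walk.length_append]
          have hdl : (q.dropUntil u humem).length = r.length + 1 := by
            rw [hdrop]; simp [SimpleGraph.Walk.length_cons]
          have hL1 : loop.length = 1 + (r.takeUntil u hutail).length := by
            simp [hloop, SimpleGraph.Walk.length_cons]; omega
          have hL2 : rest.length = 1 + (q.takeUntil u humem).length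
              + (r.dropUntil u hutail).length := by
            simp [hrest, SimpleGraph.Walk.length_cons, SimpleGraph.Walk.length_append]; omega
          have hwlen : n = q.length + 1 := by
            rw [← hw]; simp [SimpleGraph.Walk.length_cons]
          have hsum : loop.length + rest.length = n := by omega
          have hodd' : Odd loop.length ∨ Odd rest.length := by
            rcases Nat.even_or_odd loop.length with he | ho
            · right
              rw [Nat.odd_iff] at *
              rw [Nat.even_iff] at he
              omega
            · left; exact ho
          rcases hodd' with ho | ho
          · obtain ⟨u', c, hc, hco, hcl⟩ := ih loop.length (by omega) loop rfl ho
            exact ⟨u', c, hc, hco, by omega⟩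
          · obtain ⟨u', c, hc, hco, hcl⟩ := ih rest.length (by omega) rest rfl ho
            exact ⟨u', c, hc, hco, by omega⟩

end

section
variable {V : Type*} [DecidableEq V] [Fintype V] {G : SimpleGraph V}

open scoped Classical in
lemma mantel_local {G : SimpleGraph V} [DecidableRel G.Adj] (hG : G.CliqueFree 3) :
    ∀ n (T : Finset V), T.card = n →
      (G.edgeFinset.filter (fun e => ∀ x ∈ e, x ∈ T)).card ≤ n^2/4 := by
  intro n
  induction n using Nat.strong_induction_on with
  | _ n ih =>
    intro T hT
    set W := G.edgeFinset.filter (fun e => ∀ x ∈ e, x ∈ T) with hWdef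
    rcases Finset.eq_empty_or_nonempty W with hW | ⟨e, he⟩
    · simp [hW]
    obtain ⟨a, b, rfl⟩ : ∃ x y, e = s(x,y) := Sym2.ind (fun x y => ⟨x, y, rfl⟩) e
    have heW := he
    rw [hWdef, Finset.mem_filter] at he
    have hab : G.Adj a b := by
      have := he.1
      rwa [SimpleGraph.mem_edgeFinset, SimpleGraph.mem_edgeSet] at this
    have haT : a ∈ T := he.2 a (by simp)
    have hbT : b ∈ T := he.2 b (by simp)
    have hn2 : 2 ≤ n := by
      rw [← hT]
      exact Finset.one_lt_card.mpr ⟨a, haT, b, hbT, hab.ne⟩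
    set T' := T \ {a, b} with hT'def
    have hT' : T'.card = n - 2 := by
      rw [hT'def, Finset.card_sdiff_of_subset (by
        intro x hx
        simp only [Finset.mem_insert, Finset.mem_singleton] at hx
        rcases hx with rfl | rfl <;> assumption)]
      rw [hT]
      congr 1
      rw [Finset.card_insert_of_notMem (by simp [hab.ne]), Finset.card_singleton]
    set W' := G.edgeFinset.filter (fun e => ∀ x ∈ e, x ∈ T') with hW'def
    set Ta := W.filter (fun e => a ∈ e) with hTadef
    set Tb := W.filter (fun e => b ∈ e) with hTbdef
    -- W ⊆ W' ∪ (Ta ∪ Tb)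
    have hsplit : W ⊆ W' ∪ (Ta ∪ Tb) := by
      intro e heW'
      by_cases htouch : a ∈ e ∨ b ∈ e
      · rcases htouch with h | h
        · exact Finset.mem_union_right _ (Finset.mem_union_left _
            (Finset.mem_filter.mpr ⟨heW', h⟩))
        · exact Finset.mem_union_right _ (Finset.mem_union_right _
            (Finset.mem_filter.mpr ⟨heW', h⟩))
      · push_neg at htouch
        refine Finset.mem_union_left _ ?_
        rw [hWdef, Finset.mem_filter] at heW'
        rw [hW'def, Finset.mem_filter]
        refine ⟨heW'.1, fun x hx => ?_⟩
        rw [hT'def]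
        simp only [Finset.mem_sdiff, Finset.mem_insert, Finset.mem_singleton]
        refine ⟨heW'.2 x hx, ?_⟩
        rintro (rfl | rfl)
        · exact htouch.1 hx
        · exact htouch.2 hx
    -- bounds on Ta, Tb
    have hTa : Ta.card ≤ (G.neighborFinset a ∩ T).card := by
      refine le_trans (Finset.card_le_card ?_) (Finset.card_image_le (f := fun x => s(a,x)))
      intro e heTa
      rw [hTadef, Finset.mem_filter] at heTa
      obtain ⟨x, y, rfl⟩ : ∃ x y, e = s(x,y) := Sym2.ind (fun x y => ⟨x, y, rfl⟩) e
      obtain ⟨hew, hmem⟩ := heTa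
      rw [hWdef, Finset.mem_filter] at hew
      have hadj : G.Adj x y := by
        have := hew.1; rwa [SimpleGraph.mem_edgeFinset, SimpleGraph.mem_edgeSet] at this
      rw [Sym2.mem_iff] at hmem
      rcases hmem with rfl | rfl
      · refine Finset.mem_image.mpr ⟨y, ?_, rfl⟩
        rw [Finset.mem_inter, SimpleGraph.mem_neighborFinset]
        exact ⟨hadj, hew.2 y (by simp)⟩
      · refine Finset.mem_image.mpr ⟨x, ?_, by rw [Sym2.eq_swap]⟩
        rw [Finset.mem_inter, SimpleGraph.mem_neighborFinset]
        exact ⟨hadj.symm, hew.2 x (by simp)⟩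
    have hTb : Tb.card ≤ (G.neighborFinset b ∩ T).card := by
      refine le_trans (Finset.card_le_card ?_) (Finset.card_image_le (f := fun x => s(b,x)))
      intro e heTb
      rw [hTbdef, Finset.mem_filter] at heTb
      obtain ⟨x, y, rfl⟩ : ∃ x y, e = s(x,y) := Sym2.ind (fun x y => ⟨x, y, rfl⟩) e
      obtain ⟨hew, hmem⟩ := heTb
      rw [hWdef, Finset.mem_filter] at hew
      have hadj : G.Adj x y := by
        have := hew.1; rwa [SimpleGraph.mem_edgeFinset, SimpleGraph.mem_edgeSet] at this
      rw [Sym2.mem_iff] at hmem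
      rcases hmem with rfl | rfl
      · refine Finset.mem_image.mpr ⟨y, ?_, rfl⟩
        rw [Finset.mem_inter, SimpleGraph.mem_neighborFinset]
        exact ⟨hadj, hew.2 y (by simp)⟩
      · refine Finset.mem_image.mpr ⟨x, ?_, by rw [Sym2.eq_swap]⟩
        rw [Finset.mem_inter, SimpleGraph.mem_neighborFinset]
        exact ⟨hadj.symm, hew.2 x (by simp)⟩
    -- neighborhoods are disjoint (triangle-free)
    have hdisj : Disjoint (G.neighborFinset a ∩ T) (G.neighborFinset b ∩ T) := by
      rw [Finset.disjoint_left]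
      intro x hx hx'
      rw [Finset.mem_inter, SimpleGraph.mem_neighborFinset] at hx hx'
      exact hG _ (SimpleGraph.is3Clique_triple_iff.mpr ⟨hab, hx.1, hx'.1⟩)
    have hNsum : (G.neighborFinset a ∩ T).card + (G.neighborFinset b ∩ T).card ≤ n := by
      rw [← Finset.card_union_of_disjoint hdisj, ← hT]
      exact Finset.card_le_card (by
        intro x hx
        rw [Finset.mem_union] at hx
        rcases hx with hx | hx <;> exact (Finset.mem_inter.mp hx).2)
    -- s(a,b) in both Ta and Tb
    have hinter : s(a,b) ∈ Ta ∩ Tb := by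
      rw [Finset.mem_inter, hTadef, hTbdef]
      exact ⟨Finset.mem_filter.mpr ⟨heW, by simp⟩, Finset.mem_filter.mpr ⟨heW, by simp⟩⟩
    have hTouch : (Ta ∪ Tb).card ≤ n - 1 := by
      have hc := Finset.card_union_add_card_inter Ta Tb
      have h1 : 1 ≤ (Ta ∩ Tb).card := Finset.card_pos.mpr ⟨_, hinter⟩
      omega
    have hW'card : W'.card ≤ (n-2)^2/4 := ih (n-2) (by omega) T' hT'
    have hWcard : W.card ≤ W'.card + (Ta ∪ Tb).card :=
      le_trans (Finset.card_le_card hsplit) (Finset.card_union_le _ _)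
    obtain ⟨s, rfl⟩ : ∃ s, n = s + 2 := ⟨n - 2, by omega⟩
    have hsq : (s+2)^2 = s^2 + (s+1) * 4 := by ring
    rw [hsq, Nat.add_mul_div_right _ _ (by norm_num)]
    simp only [Nat.add_sub_cancel] at hW'card
    omega

end

end EBH

/-- If `H` is a triangle-free graph on `m` vertices whose shortest odd cycle has length `2k+1`
with `k ≥ 2`, then `e(H) ≤ (2k+1) + 2(m−2k−1) + ⌊(m−2k−1)²/4⌋`. -/
theorem edge_bound_shortest_odd_cycle {V : Type*} [Fintype V] [DecidableEq V]
    (H : SimpleGraph V) [DecidableRel H.Adj] (hH : H.CliqueFree 3)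
    (m k : ℕ) (hm : Fintype.card V = m) (hk : 2 ≤ k)
    (hcyc : ∃ (v : V) (c : H.Walk v v), c.IsCycle ∧ c.length = 2 * k + 1)
    (hshort : ∀ (w : V) (c' : H.Walk w w), c'.IsCycle → Odd c'.length →
      2 * k + 1 ≤ c'.length) :
    H.edgeFinset.card ≤
      (2 * k + 1) + 2 * (m - (2 * k + 1)) + (m - (2 * k + 1)) ^ 2 / 4 := by
  classical
  obtain ⟨v, c, hc, hlen⟩ := hcyc
  -- any closed walk of odd length has length ≥ 2k+1
  have hLB : ∀ (u : V) (w : H.Walk u u), Odd w.length → 2*k+1 ≤ w.length := by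
    intro u w hodd
    obtain ⟨u', c', hc', hodd', hle⟩ := EBH.exists_odd_cycle w.length w rfl hodd
    exact le_trans (hshort u' c' hc' hodd') hle
  set S : Finset V := c.support.toFinset with hSdef
  have hmemS : ∀ a, a ∈ S ↔ a ∈ c.support := fun a => List.mem_toFinset
  have hg0 : c.getVert 0 = v := c.getVert_zero
  have hgl : c.getVert (2*k+1) = v := by rw [← hlen]; exact c.getVert_length
  have htail : c.support.tail.Nodup := hc.support_nodup
  have hsuplen : c.support.length = 2*k+2 := by
    rw [SimpleGraph.Walk.length_support, hlen]
  have htaillen : c.support.tail.length = 2*k+1 := by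
    rw [List.length_tail, hsuplen]
    omega
  -- getVert is injective on [0, 2k]
  have hkey : ∀ (i : ℕ) (h : i < c.support.tail.length),
      c.support.tail[i] = c.getVert (i+1) := by
    intro i hi
    rw [EBH.getVert_eq_support_getElem' c (by simp only [List.length_tail, hsuplen] at hi; omega)]
    rw [List.getElem_tail]
  have hinj : ∀ i j, i ≤ 2*k → j ≤ 2*k → c.getVert i = c.getVert j → i = j := by
    have base : ∀ i j, i < j → j ≤ 2*k → c.getVert i = c.getVert j → False := by
      intro i j hij hj hgij
      rcases Nat.eq_zero_or_pos i with rfl | hi0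
      · have hb1 : j - 1 < c.support.tail.length := by rw [htaillen]; omega
        have hb2 : 2*k < c.support.tail.length := by rw [htaillen]; omega
        have e1 : c.support.tail[j-1]'hb1 = c.support.tail[2*k]'hb2 := by
          rw [hkey _ hb1, hkey _ hb2, show (j-1)+1 = j by omega]
          rw [← hgij, hg0, hgl]
        have := (List.Nodup.getElem_inj_iff htail).mp e1
        omega
      · have hb1 : i - 1 < c.support.tail.length := by rw [htaillen]; omega
        have hb2 : j - 1 < c.support.tail.length := by rw [htaillen]; omega
        have e1 : c.support.tail[i-1]'hb1 = c.support.tail[j-1]'hb2 := by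
          rw [hkey _ hb1, hkey _ hb2, show (i-1)+1 = i by omega, show (j-1)+1 = j by omega]
          exact hgij
        have := (List.Nodup.getElem_inj_iff htail).mp e1
        omega
    intro i j hi hj hgij
    rcases Nat.lt_trichotomy i j with h | h | h
    · exact absurd hgij (fun hh => base i j h hj hh)
    · exact h
    · exact absurd hgij.symm (fun hh => base j i h hi hh)
  -- indices for members of S
  have hidx : ∀ a ∈ S, ∃ i ≤ 2*k, c.getVert i = a := by
    intro a ha
    rw [hmemS] at ha
    obtain ⟨i, hgi, hile⟩ := SimpleGraph.Walk.mem_support_iff_exists_getVert.mp ha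
    rw [hlen] at hile
    rcases Nat.lt_or_ge i (2*k+1) with h | h
    · exact ⟨i, by omega, hgi⟩
    · have : i = 2*k+1 := by omega
      subst this
      exact ⟨0, by omega, by rw [hg0, ← hgl, hgi]⟩
  -- chords of the cycle are cycle edges
  have chordAux : ∀ i j, i < j → j ≤ 2*k → H.Adj (c.getVert i) (c.getVert j) →
      s(c.getVert i, c.getVert j) ∈ c.edges := by
    intro i j hij hj hadj
    obtain ⟨p, hp⟩ := EBH.exists_arc c i j (le_of_lt hij) (by omega)
    obtain ⟨q1, hq1⟩ := EBH.exists_arc c j (2*k+1) (by omega) (by omega)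
    obtain ⟨q2, hq2⟩ := EBH.exists_arc c 0 i (by omega) (by omega)
    set W1 : H.Walk (c.getVert i) (c.getVert i) := p.concat hadj.symm with hW1
    set W2 : H.Walk (c.getVert j) (c.getVert j) :=
      ((q1.copy rfl hgl).append (q2.copy hg0 rfl)).concat hadj with hW2
    have hW1len : W1.length = (j - i) + 1 := by
      rw [hW1, SimpleGraph.Walk.length_concat, hp]
    have hW2len : W2.length = (2*k+1-j) + i + 1 := by
      rw [hW2, SimpleGraph.Walk.length_concat, SimpleGraph.Walk.length_append,
        SimpleGraph.Walk.length_copy, SimpleGraph.Walk.length_copy, hq1, hq2]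
      omega
    rcases Nat.even_or_odd (j - i) with hev | hod
    · -- W1 odd
      rw [Nat.even_iff] at hev
      have := hLB _ W1 (by rw [Nat.odd_iff, hW1len]; omega)
      rw [hW1len] at this
      have hij0 : i = 0 ∧ j = 2*k := by omega
      obtain ⟨rfl, rfl⟩ := hij0
      have hedge := EBH.sym2_getVert_mem_edges c (2*k) (by omega)
      have hvv : c.getVert (2*k+1) = c.getVert 0 := by rw [hgl, hg0]
      rw [Sym2.eq_swap, ← hvv]
      exact hedge
    · -- W2 odd
      rw [Nat.odd_iff] at hod
      have := hLB _ W2 (by rw [Nat.odd_iff, hW2len]; omega)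
      rw [hW2len] at this
      have hj1 : j = i + 1 := by omega
      subst hj1
      exact EBH.sym2_getVert_mem_edges c i (by omega)
  have chord : ∀ a b, H.Adj a b → a ∈ S → b ∈ S → s(a, b) ∈ c.edges := by
    intro a b hadj ha hb
    obtain ⟨i, hi, rfl⟩ := hidx a ha
    obtain ⟨j, hj, rfl⟩ := hidx b hb
    have hne : i ≠ j := fun h => hadj.ne (by rw [h])
    rcases Nat.lt_or_ge i j with h | h
    · exact chordAux i j h hj hadj
    · have := chordAux j i (by omega) hi hadj.symm
      rwa [Sym2.eq_swap]
  -- a vertex outside S has at most 2 neighbors in S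
  have nbrAux : ∀ u i j, i < j → j ≤ 2*k → H.Adj u (c.getVert i) → H.Adj u (c.getVert j) →
      (j - i = 2 ∨ j - i = 2*k - 1) := by
    intro u i j hij hj hui huj
    obtain ⟨p, hp⟩ := EBH.exists_arc c i j (le_of_lt hij) (by omega)
    obtain ⟨q1, hq1⟩ := EBH.exists_arc c j (2*k+1) (by omega) (by omega)
    obtain ⟨q2, hq2⟩ := EBH.exists_arc c 0 i (by omega) (by omega)
    set W1 : H.Walk u u := Walk.cons hui (p.concat huj.symm) with hW1
    set W2 : H.Walk u u :=
      Walk.cons huj (((q1.copy rfl hgl).append (q2.copy hg0 rfl)).concat hui.symm) with hW2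
    have hW1len : W1.length = (j - i) + 2 := by
      rw [hW1, SimpleGraph.Walk.length_cons, SimpleGraph.Walk.length_concat, hp]
    have hW2len : W2.length = (2*k+1-j) + i + 2 := by
      rw [hW2, SimpleGraph.Walk.length_cons, SimpleGraph.Walk.length_concat,
        SimpleGraph.Walk.length_append, SimpleGraph.Walk.length_copy,
        SimpleGraph.Walk.length_copy, hq1, hq2]
      omega
    rcases Nat.even_or_odd (j - i) with hev | hod
    · rw [Nat.even_iff] at hev
      have := hLB _ W2 (by rw [Nat.odd_iff, hW2len]; omega)
      rw [hW2len] at this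
      left; omega
    · rw [Nat.odd_iff] at hod
      have := hLB _ W1 (by rw [Nat.odd_iff, hW1len]; omega)
      rw [hW1len] at this
      right; omega
  have nbr2 : ∀ u, (H.neighborFinset u ∩ S).card ≤ 2 := by
    intro u
    by_contra hcard
    push_neg at hcard
    obtain ⟨a, ha, b, hb, d, hd, hab, had, hbd⟩ := Finset.two_lt_card.mp hcard
    rw [Finset.mem_inter, SimpleGraph.mem_neighborFinset] at ha hb hd
    obtain ⟨ia, hia, rfl⟩ := hidx a ha.2
    obtain ⟨ib, hib, rfl⟩ := hidx b hb.2
    obtain ⟨id, hid, rfl⟩ := hidx d hd.2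
    have hA := ha.1
    have hB := hb.1
    have hD := hd.1
    have key : ∀ x y z, x < y → y < z → z ≤ 2*k →
        H.Adj u (c.getVert x) → H.Adj u (c.getVert y) → H.Adj u (c.getVert z) → False := by
      intro x y z hxy hyz hz hx hy hzz
      have h1 := nbrAux u x y hxy (by omega) hx hy
      have h2 := nbrAux u y z hyz hz hy hzz
      have h3 := nbrAux u x z (by omega) hz hx hzz
      omega
    have hne1 : ia ≠ ib := fun h => hab (by rw [h])
    have hne2 : ia ≠ id := fun h => had (by rw [h])
    have hne3 : ib ≠ id := fun h => hbd (by rw [h])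
    rcases Nat.lt_trichotomy ia ib with h1 | h1 | h1
    · rcases Nat.lt_trichotomy ib id with h2 | h2 | h2
      · exact key ia ib id h1 h2 hid hA hB hD
      · exact hne3 h2
      · rcases Nat.lt_trichotomy ia id with h3 | h3 | h3
        · exact key ia id ib h3 h2 hib hA hD hB
        · exact hne2 h3
        · exact key id ia ib h3 h1 hib hD hA hB
    · exact hne1 h1
    · rcases Nat.lt_trichotomy ia id with h2 | h2 | h2
      · exact key ib ia id h1 h2 hid hB hA hD
      · exact hne2 h2
      · rcases Nat.lt_trichotomy ib id with h3 | h3 | h3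
        · exact key ib id ia h3 h2 hia hB hD hA
        · exact hne3 h3
        · exact key id ib ia h3 h1 hia hD hB hA
  -- cardinality of S
  have hScard : S.card = 2*k+1 := by
    have hvtail : v ∈ c.support.tail := by
      cases c with
      | nil => exact absurd rfl hc.ne_nil
      | cons h q => simpa using q.end_mem_support
    have hSeq : S = c.support.tail.toFinset := by
      ext x
      rw [hmemS, List.mem_toFinset]
      constructor
      · intro hx
        rw [c.support_eq_cons, List.mem_cons] at hx
        rcases hx with rfl | hx
        · exact hvtail
        · exact hx
      · intro hx
        rw [c.support_eq_cons, List.mem_cons]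
        exact Or.inr hx
    rw [hSeq, List.toFinset_card_of_nodup htail, htaillen]
  set T : Finset V := Finset.univ \ S with hTdef
  have hTcard : T.card = m - (2*k+1) := by
    rw [hTdef, Finset.card_sdiff_of_subset (Finset.subset_univ S), Finset.card_univ, hm, hScard]
  -- partition the edges
  set P1 : Sym2 V → Prop := fun e => ∀ x ∈ e, x ∈ S with hP1
  set Q : Sym2 V → Prop := fun e => ∀ x ∈ e, x ∉ S with hQ
  set E1 := H.edgeFinset.filter P1 with hE1
  set Erest := H.edgeFinset.filter (fun e => ¬ P1 e) with hErest
  set E2 := Erest.filter (fun e => ¬ Q e) with hE2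
  set E3 := Erest.filter Q with hE3
  have htot1 : E1.card + Erest.card = H.edgeFinset.card :=
    Finset.card_filter_add_card_filter_not _
  have htot2 : E3.card + E2.card = Erest.card :=
    Finset.card_filter_add_card_filter_not _
  -- bound E1
  have hE1card : E1.card ≤ 2*k+1 := by
    have hsub : E1 ⊆ c.edges.toFinset := by
      intro e he
      rw [hE1, Finset.mem_filter] at he
      obtain ⟨x, y, rfl⟩ : ∃ x y, e = s(x,y) := Sym2.ind (fun x y => ⟨x, y, rfl⟩) e
      have hadj : H.Adj x y := by
        have := he.1
        rwa [SimpleGraph.mem_edgeFinset, SimpleGraph.mem_edgeSet] at this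
      rw [List.mem_toFinset]
      exact chord x y hadj (he.2 x (by simp)) (he.2 y (by simp))
    calc E1.card ≤ c.edges.toFinset.card := Finset.card_le_card hsub
      _ ≤ c.edges.length := c.edges.toFinset_card_le
      _ = 2*k+1 := by rw [SimpleGraph.Walk.length_edges, hlen]
  -- bound E2
  have hE2card : E2.card ≤ 2 * (m - (2*k+1)) := by
    set f : Sym2 V → V := fun e => if h : ∃ x ∈ e, x ∉ S then h.choose else v with hf
    have hmaps : ∀ e ∈ E2, f e ∈ T := by
      intro e he
      rw [hE2, Finset.mem_filter, hErest, Finset.mem_filter] at he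
      have hex : ∃ x ∈ e, x ∉ S := by
        have := he.1.2
        simp only [hP1] at this
        push_neg at this
        exact this
      rw [hf]
      simp only [hex, dite_true]
      obtain ⟨-, hns⟩ := hex.choose_spec
      rw [hTdef, Finset.mem_sdiff]
      exact ⟨Finset.mem_univ _, hns⟩
    refine le_trans (Finset.card_le_mul_card_image_of_maps_to hmaps 2 ?_) (by omega)
    intro u hu
    have huS : u ∉ S := by
      rw [hTdef, Finset.mem_sdiff] at hu
      exact hu.2
    have hsub : (E2.filter (fun e => f e = u)) ⊆
        (H.neighborFinset u ∩ S).image (fun x => s(u, x)) := by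
      intro e he
      rw [Finset.mem_filter] at he
      obtain ⟨heE2, hfu⟩ := he
      rw [hE2, Finset.mem_filter, hErest, Finset.mem_filter] at heE2
      obtain ⟨⟨hedge, hnp1⟩, hnq⟩ := heE2
      have hex : ∃ x ∈ e, x ∉ S := by
        simp only [hP1] at hnp1; push_neg at hnp1; exact hnp1
      have hue : u ∈ e := by
        rw [hf] at hfu
        simp only [hex, dite_true] at hfu
        rw [← hfu]
        exact hex.choose_spec.1
      have hexS : ∃ x ∈ e, x ∈ S := by
        simp only [hQ] at hnq; push_neg at hnq; exact hnq
      obtain ⟨x, y, rfl⟩ : ∃ x y, e = s(x,y) := Sym2.ind (fun x y => ⟨x, y, rfl⟩) e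
      have hadj : H.Adj x y := by
        rwa [SimpleGraph.mem_edgeFinset, SimpleGraph.mem_edgeSet] at hedge
      obtain ⟨z, hz, hzS⟩ := hexS
      rw [Sym2.mem_iff] at hue hz
      rcases hue with rfl | rfl
      · -- e = s(u, y)
        have hyS : y ∈ S := by
          rcases hz with rfl | rfl
          · exact absurd hzS huS
          · exact hzS
        refine Finset.mem_image.mpr ⟨y, ?_, rfl⟩
        rw [Finset.mem_inter, SimpleGraph.mem_neighborFinset]
        exact ⟨hadj, hyS⟩
      · -- e = s(x, u)
        have hxS : x ∈ S := by
          rcases hz with rfl | rfl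
          · exact hzS
          · exact absurd hzS huS
        refine Finset.mem_image.mpr ⟨x, ?_, by rw [Sym2.eq_swap]⟩
        rw [Finset.mem_inter, SimpleGraph.mem_neighborFinset]
        exact ⟨hadj.symm, hxS⟩
    calc (E2.filter (fun e => f e = u)).card
        ≤ ((H.neighborFinset u ∩ S).image (fun x => s(u, x))).card :=
          Finset.card_le_card hsub
      _ ≤ (H.neighborFinset u ∩ S).card := Finset.card_image_le
      _ ≤ 2 := nbr2 u
  -- bound E3
  have hE3card : E3.card ≤ (m - (2*k+1))^2/4 := by
    have hsub : E3 ⊆ H.edgeFinset.filter (fun e => ∀ x ∈ e, x ∈ T) := by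
      intro e he
      rw [hE3, Finset.mem_filter, hErest, Finset.mem_filter] at he
      obtain ⟨⟨hedge, -⟩, hq⟩ := he
      rw [Finset.mem_filter]
      refine ⟨hedge, fun x hx => ?_⟩
      rw [hTdef, Finset.mem_sdiff]
      exact ⟨Finset.mem_univ _, hq x hx⟩
    calc E3.card ≤ (H.edgeFinset.filter (fun e => ∀ x ∈ e, x ∈ T)).card := by
          refine Finset.card_le_card ?_
          intro e he
          have := hsub he
          simp only [Finset.mem_filter] at this ⊢
          exact this
      _ ≤ (m - (2*k+1))^2/4 := by
          have := EBH.mantel_local hH (m - (2*k+1)) T hTcard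
          convert this using 2
    
  have := htot1
  have := htot2
  set A := (m - (2*k+1))^2/4
  omega
end

section
/- Let H be a triangle-free simple graph on m vertices that is not bipartite (equivalently, H contains an odd cycle). Then the number of edges of H is at most ⌊(m+1)²/4⌋ − m + 1. -/
/-!
Take a shortest odd closed walk `C` in `H`, of length `g`. By minimality its vertices are
distinct, `g ≥ 5` since `H` has no triangle, and every vertex has at most two neighbours on `C`:
a vertex adjacent to two vertices of `C` closes the odd arc between them into an odd closed walk,
which must not be shorter than `g`, so the two vertices are at distance two on `C`. Hence at most
`g + 2 (m - g)` edges meet `C`, and by Mantel's theorem at most `⌊(m - g)² / 4⌋` edges avoid it;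
for odd `g ≥ 5` this sum is at most `⌊(m + 1)² / 4⌋ - m + 1`.
-/

open Finset

namespace SimpleGraph

variable {V : Type*} {G : SimpleGraph V}

namespace Walk

variable {u v : V}

lemma exists_length_eq_sub (p : G.Walk u v) {i j : ℕ} (hij : i ≤ j) (hj : j ≤ p.length) :
    ∃ q : G.Walk (p.getVert i) (p.getVert j), q.length = j - i :=
  ⟨((p.drop i).take (j - i)).copy rfl (by rw [drop_getVert]; congr 1; omega), by
    rw [length_copy, take_length, drop_length]; omega⟩

lemma exists_length_eq_length_sub (p : G.Walk u u) {i j : ℕ} (hij : i ≤ j) (hj : j ≤ p.length) :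
    ∃ q : G.Walk (p.getVert i) (p.getVert j), q.length = p.length - (j - i) :=
  ⟨((p.drop j).append (p.take i)).reverse, by
    rw [length_reverse, length_append, drop_length, take_length]; omega⟩

lemma exists_odd_length (p : G.Walk u u) (hp : Odd p.length) {i j : ℕ} (hij : i ≤ j)
    (hj : j ≤ p.length) :
    ∃ q : G.Walk (p.getVert i) (p.getVert j),
      Odd q.length ∧ (q.length = j - i ∨ q.length = p.length - (j - i)) := by
  obtain ⟨q, hq⟩ := p.exists_length_eq_sub hij hj
  obtain ⟨r, hr⟩ := p.exists_length_eq_length_sub hij hj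
  rcases Nat.even_or_odd (j - i) with he | ho
  · refine ⟨r, ?_, .inr hr⟩
    rw [hr]
    exact Nat.Odd.sub_even (by omega) hp he
  · exact ⟨q, hq ▸ ho, .inl hq⟩

structure IsShortestOddLoop (p : G.Walk u u) : Prop where
  odd_length : Odd p.length
  length_le : ∀ (v : V) (q : G.Walk v v), Odd q.length → p.length ≤ q.length

namespace IsShortestOddLoop

variable {p : G.Walk u u}

lemma getVert_injOn (hp : p.IsShortestOddLoop) : Set.InjOn p.getVert (Set.Iio p.length) := by
  intro i hi j hj hij
  by_contra hne
  wlog hlt : i < j generalizing i j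
  · exact this hj hi hij.symm (Ne.symm hne) (by omega)
  obtain ⟨q, hodd, hq⟩ := p.exists_odd_length hp.odd_length hlt.le (Set.mem_Iio.mp hj).le
  have := hp.length_le _ (q.copy rfl hij.symm) (by rwa [length_copy])
  rw [length_copy] at this
  have := Set.mem_Iio.mp hj
  omega

lemma eq_add_two_or_of_adj_getVert (hp : p.IsShortestOddLoop) {v : V} {i j : ℕ} (hij : i < j)
    (hj : j < p.length) (hvi : G.Adj v (p.getVert i)) (hvj : G.Adj v (p.getVert j)) :
    j = i + 2 ∨ j + 2 = i + p.length := by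
  -- Closing the odd arc between the two positions through `v` costs two more edges, so that arc
  -- has length at least `p.length - 2` and the complementary (even) arc has length two.
  obtain ⟨q, hodd, hq⟩ := p.exists_odd_length hp.odd_length hij.le hj.le
  have hlen := Nat.odd_iff.mp hp.odd_length
  rw [Nat.odd_iff] at hodd
  have := hp.length_le v (cons hvi (q.concat hvj.symm)) (by
    rw [length_cons, length_concat, Nat.odd_iff]; omega)
  rw [length_cons, length_concat] at this
  omega

lemma three_lt_length [DecidableEq V] (hp : p.IsShortestOddLoop) (hG : G.CliqueFree 3) :
    3 < p.length := by
  have hlen := Nat.odd_iff.mp hp.odd_length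
  by_contra hle
  obtain h | h : p.length = 1 ∨ p.length = 3 := by omega
  · have h1 := p.adj_getVert_succ (i := 0) (by omega)
    rw [zero_add, getVert_zero, ← h, getVert_length] at h1
    exact G.irrefl h1
  · have h1 := p.adj_getVert_succ (i := 0) (by omega)
    have h2 := p.adj_getVert_succ (i := 1) (by omega)
    have h3 := p.adj_getVert_succ (i := 2) (by omega)
    rw [zero_add, getVert_zero] at h1
    rw [show 2 + 1 = p.length by omega, getVert_length] at h3
    exact hG _ (is3Clique_triple_iff.mpr ⟨h1, h3.symm, h2⟩)

lemma card_filter_adj_le_two [DecidableEq V] [DecidableRel G.Adj] (hp : p.IsShortestOddLoop)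
    (h3 : 3 < p.length) (v : V) : #{w ∈ (range p.length).image p.getVert | G.Adj v w} ≤ 2 := by
  rw [filter_image]
  refine card_image_le.trans (not_lt.mp fun hlt => ?_)
  obtain ⟨i, hi, j, hj, k, hk, hij, hik, hjk⟩ := two_lt_card.mp hlt
  simp only [mem_filter, mem_range] at hi hj hk
  have hpair : ∀ a b, a < p.length → b < p.length → G.Adj v (p.getVert a) →
      G.Adj v (p.getVert b) → a ≠ b →
      b = a + 2 ∨ b + 2 = a + p.length ∨ a = b + 2 ∨ a + 2 = b + p.length := by
    intro a b ha hb hva hvb hab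
    rcases Nat.lt_or_gt_of_ne hab with h | h
    · have := hp.eq_add_two_or_of_adj_getVert h hb hva hvb
      omega
    · have := hp.eq_add_two_or_of_adj_getVert h ha hvb hva
      omega
  have := hpair i j hi.1 hj.1 hi.2 hj.2 hij
  have := hpair i k hi.1 hk.1 hi.2 hk.2 hik
  have := hpair j k hj.1 hk.1 hj.2 hk.2 hjk
  -- Three positions pairwise at cyclic distance two would force `p.length ∣ 6`.
  have := Nat.odd_iff.mp hp.odd_length
  omega

end IsShortestOddLoop

end Walk

lemma exists_isShortestOddLoop (h : ¬ G.Colorable 2) :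
    ∃ (u : V) (p : G.Walk u u), p.IsShortestOddLoop := by
  classical
  simp_rw [two_colorable_iff_forall_loop_even, not_forall, Nat.not_even_iff_odd] at h
  have hex : ∃ n, ∃ (u : V) (p : G.Walk u u), Odd p.length ∧ p.length = n :=
    let ⟨u, p, hp⟩ := h; ⟨_, u, p, hp, rfl⟩
  obtain ⟨u, p, hodd, hlen⟩ := Nat.find_spec hex
  exact ⟨u, p, hodd, fun v q hq => hlen ▸ Nat.find_min' hex ⟨v, q, hq, rfl⟩⟩

section Counting

variable [Fintype V] [DecidableRel G.Adj]

theorem CliqueFree.card_edgeFinset_le_sq_div_four (hG : G.CliqueFree 3) :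
    #G.edgeFinset ≤ Fintype.card V ^ 2 / 4 := by
  refine (hG.card_edgeFinset_le (r := 2)).trans ?_
  rw [Nat.choose_eq_zero_of_lt (Nat.mod_lt _ two_pos), add_zero, Nat.add_one_sub_one, mul_one]
  exact Nat.div_le_div_right (Nat.sub_le _ _)

variable [DecidableEq V]

lemma sum_card_filter_adj_eq_two_mul_card_edgeFinset_induce (T : Finset V) :
    ∑ v ∈ T, #{w ∈ T | G.Adj v w} = 2 * #(G.induce (T : Set V)).edgeFinset := by
  rw [← sum_degrees_eq_twice_card_edges, ← sum_coe_sort T]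
  refine Fintype.sum_congr _ _ fun v => ?_
  have := congrArg card (map_neighborFinset_induce (G := G) (s := (T : Set V)) v)
  rw [card_map, card_neighborFinset_eq_degree, neighborFinset_eq_filter, Finset.toFinset_coe,
    filter_inter, univ_inter] at this
  convert this.symm

theorem CliqueFree.sum_card_filter_adj_le (hG : G.CliqueFree 3) (T : Finset V) :
    ∑ v ∈ T, #{w ∈ T | G.Adj v w} ≤ 2 * (#T ^ 2 / 4) := by
  rw [sum_card_filter_adj_eq_two_mul_card_edgeFinset_induce]
  have := (hG.comap (Embedding.induce (T : Set V)).isContained).card_edgeFinset_le_sq_div_four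
  simpa using this

lemma two_mul_card_edgeFinset_le (S : Finset V) {k : ℕ} (hS : ∀ v, #{w ∈ S | G.Adj v w} ≤ k) :
    2 * #G.edgeFinset ≤ k * #S + 2 * (k * #Sᶜ) + ∑ v ∈ Sᶜ, #{w ∈ Sᶜ | G.Adj v w} := by
  have hdeg v : G.degree v = #{w ∈ S | G.Adj v w} + #{w ∈ Sᶜ | G.Adj v w} := by
    rw [← card_neighborFinset_eq_degree, neighborFinset_eq_filter, card_filter, card_filter,
      card_filter, sum_add_sum_compl]
  have hswap : ∑ v ∈ S, #{w ∈ Sᶜ | G.Adj v w} = ∑ v ∈ Sᶜ, #{w ∈ S | G.Adj v w} := by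
    simpa [bipartiteAbove, bipartiteBelow, adj_comm] using
      sum_card_bipartiteAbove_eq_sum_card_bipartiteBelow (s := S) (t := Sᶜ) G.Adj
  calc 2 * #G.edgeFinset = ∑ v, G.degree v := (sum_degrees_eq_twice_card_edges G).symm
    _ = ∑ v ∈ S, #{w ∈ S | G.Adj v w} + 2 * ∑ v ∈ Sᶜ, #{w ∈ S | G.Adj v w}
          + ∑ v ∈ Sᶜ, #{w ∈ Sᶜ | G.Adj v w} := by
      simp_rw [hdeg, sum_add_distrib, ← sum_add_sum_compl S, hswap]
      ring
    _ ≤ k * #S + 2 * (k * #Sᶜ) + ∑ v ∈ Sᶜ, #{w ∈ Sᶜ | G.Adj v w} := by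
      have hS' (T : Finset V) : ∑ v ∈ T, #{w ∈ S | G.Adj v w} ≤ k * #T := by
        simpa [mul_comm] using sum_le_card_nsmul T _ k fun v _ => hS v
      grw [hS' S, hS' Sᶜ]

end Counting

end SimpleGraph

lemma add_two_mul_sub_add_sq_div_four_le {g m : ℕ} (hg : Odd g) (h3 : 3 < g) (hgm : g ≤ m) :
    g + 2 * (m - g) + (m - g) ^ 2 / 4 ≤ (m + 1) ^ 2 / 4 - m + 1 := by
  obtain ⟨k, rfl⟩ := hg
  obtain ⟨t, rfl⟩ := Nat.exists_eq_add_of_le hgm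
  have hsq : (2 * k + 1 + t + 1) ^ 2 / 4 = t ^ 2 / 4 + (t * (k + 1) + (k + 1) ^ 2) := by
    rw [← Nat.add_mul_div_left _ _ four_pos]
    ring_nf
  rw [Nat.add_sub_cancel_left, hsq]
  have : t * 2 ≤ t * k := Nat.mul_le_mul_left t (by omega)
  have : k * 2 ≤ k * k := Nat.mul_le_mul_left k (by omega)
  ring_nf at *
  omega

/-- A triangle-free non-bipartite (i.e. not 2-colorable) graph on `m` vertices has at most
`⌊(m+1)²/4⌋ − m + 1` edges. -/
theorem edge_bound_triangle_free_non_bipartite {V : Type*} [Fintype V] [DecidableEq V]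
    (H : SimpleGraph V) [DecidableRel H.Adj] (hH : H.CliqueFree 3)
    (m : ℕ) (hm : Fintype.card V = m) (hnb : ¬ H.Colorable 2) :
    H.edgeFinset.card ≤ (m + 1) ^ 2 / 4 - m + 1 := by
  obtain ⟨u, p, hp⟩ := SimpleGraph.exists_isShortestOddLoop hnb
  have h3 := hp.three_lt_length hH
  set C := (range p.length).image p.getVert
  have hC : #C = p.length := by
    rw [card_image_of_injOn (by simpa using hp.getVert_injOn), card_range]
  have hCc : #Cᶜ = m - p.length := by rw [card_compl, hC, hm]
  have hcount := SimpleGraph.two_mul_card_edgeFinset_le C (hp.card_filter_adj_le_two h3)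
  have hmantel := hH.sum_card_filter_adj_le Cᶜ
  have hle : p.length ≤ m := hC ▸ hm ▸ card_le_univ C
  have := add_two_mul_sub_add_sq_div_four_le hp.odd_length h3 hle
  rw [hC, hCc] at hcount
  rw [hCc] at hmantel
  omega
end

section
/- Let n ≥ 3 and let G be a simple graph on n vertices with ⌊n²/4⌋ + 1 edges. Suppose v₀ is a vertex of G that lies in every triangle of G, and suppose G has at most n − 3 triangles. Then the graph G − v₀ obtained by deleting v₀ (and all edges incident to it) is bipartite. -/
/-!
If `G - v₀` were not bipartite, it would be a triangle-free (every triangle contains `v₀`)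
non-bipartite graph on `n - 1` vertices, hence have at most `⌊(n-2)²/4⌋ + 1` edges. As
`⌊n²/4⌋ = ⌊(n-2)²/4⌋ + n - 1`, the edge count of `G` then forces `v₀` to be adjacent to every
other vertex and `G - v₀` to have `⌊(n-2)²/4⌋ + 1 > n - 3` edges, each spanning a triangle
with `v₀`.

The bound for a triangle-free non-bipartite graph on `m` vertices goes by induction on `m`.
Some vertex `v` has degree below `m/2`: otherwise two adjacent vertices have disjoint
neighbourhoods covering the graph, which is then bipartite. If `G - v` is not bipartite,
induction applies. Otherwise `v` has neighbour sets `P`, `Q` on both sides of a bipartition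
`(s, t)` of `G - v`, with no edges between `P` and `Q`, so
`e(G) ≤ |s||t| - |P||Q| + |P| + |Q| ≤ ⌊(m-1)²/4⌋ + 1`.
-/

open Finset Fintype SimpleGraph

theorem Nat.sub_one_sq_div_four_add_div_two (k : ℕ) :
    (k - 1) ^ 2 / 4 + k / 2 = k ^ 2 / 4 := by
  rcases k with _ | j
  · rfl
  · rw [Nat.add_sub_cancel]
    rcases Nat.even_or_odd' j with ⟨i, rfl | rfl⟩ <;> ring_nf <;> omega

theorem Fintype.card_compl_singleton {V : Type*} [Fintype V] [DecidableEq V] (v : V) :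
    card ({v}ᶜ : Set V) = card V - 1 := by
  rw [card_compl_set, Set.card_singleton]

namespace SimpleGraph

variable {V : Type*} {G : SimpleGraph V}

theorem not_adj_of_cliqueFree_three (h3 : G.CliqueFree 3) {v x y : V} (hx : G.Adj v x)
    (hy : G.Adj v y) : ¬ G.Adj x y := fun hxy =>
  isIndepSet_neighborSet_of_triangleFree G h3 v hx hy hxy.ne hxy

theorem colorable_of_induce_compl_singleton {n : ℕ} {v : V}
    (c : (G.induce {v}ᶜ).Coloring (Fin n)) (a : Fin n)
    (ha : ∀ w : ({v}ᶜ : Set V), G.Adj v w → c w ≠ a) : G.Colorable n := by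
  classical
  refine ⟨Coloring.mk (fun x => if h : x = v then a else c ⟨x, h⟩) fun {x y} hxy => ?_⟩
  by_cases hx : x = v <;> by_cases hy : y = v <;> simp only [hx, hy, dite_true, dite_false]
  · exact absurd (hx.trans hy.symm) hxy.ne
  · subst hx; exact (ha ⟨y, hy⟩ hxy).symm
  · subst hy; exact ha ⟨x, hx⟩ hxy.symm
  · exact c.valid (show (G.induce {v}ᶜ).Adj ⟨x, hx⟩ ⟨y, hy⟩ from hxy)

theorem cliqueFree_induce_compl_singleton {n : ℕ} {v : V}
    (h : ∀ t, G.IsNClique n t → v ∈ t) : (G.induce {v}ᶜ).CliqueFree n := by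
  intro t ht
  let f := (Embedding.induce (G := G) {v}ᶜ).toEmbedding
  obtain ⟨w, -, hw⟩ := Finset.mem_map.1 (h _ ((ht.map (f := f)).mono (map_comap_le f G)))
  exact w.2 hw

theorem Coloring.isBipartiteWith_filter_eq_zero {W : Type*} [Fintype W] [DecidableEq W]
    {H : SimpleGraph W} (c : H.Coloring (Fin 2)) :
    H.IsBipartiteWith ↑({w | c w = 0} : Finset W) ↑({w | c w = 0} : Finset W)ᶜ := by
  refine ⟨by rw [coe_compl]; exact disjoint_compl_right, fun x y hxy => ?_⟩
  have := c.valid hxy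
  simp only [coe_compl, coe_filter, mem_univ, true_and, Set.mem_compl_iff, Set.mem_ofPred_eq]
  omega

theorem IsBipartiteWith.card_edgeFinset_add_mul_le {W : Type*} [Fintype W] [DecidableEq W]
    {H : SimpleGraph W} [DecidableRel H.Adj] {s t P Q : Finset W}
    (h : H.IsBipartiteWith s t) (hP : P ⊆ s) (hQ : Q ⊆ t)
    (hPQ : ∀ x ∈ P, ∀ y ∈ Q, ¬ H.Adj x y) :
    #H.edgeFinset + #P * #Q ≤ #s * #t := by
  have hdeg : ∀ x ∈ s, H.degree x + (if x ∈ P then #Q else 0) ≤ #t := by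
    intro x hx
    split_ifs with hxP
    · rw [← card_neighborFinset_eq_degree, ← card_union_of_disjoint]
      · exact card_le_card (union_subset (isBipartiteWith_neighborFinset_subset h hx) hQ)
      · rw [Finset.disjoint_left]
        intro y hy hyQ
        exact hPQ x hxP y hyQ ((mem_neighborFinset _ _ _).1 hy)
    · exact isBipartiteWith_degree_le h hx
  calc #H.edgeFinset + #P * #Q = ∑ x ∈ s, (H.degree x + if x ∈ P then #Q else 0) := by
        rw [sum_add_distrib, isBipartiteWith_sum_degrees_eq_card_edges h, Finset.sum_ite_mem,
          inter_eq_right.2 hP, sum_const, smul_eq_mul]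
    _ ≤ ∑ _x ∈ s, #t := sum_le_sum hdeg
    _ = #s * #t := by rw [sum_const, smul_eq_mul]

section

variable [Fintype V] [DecidableEq V] [DecidableRel G.Adj]

theorem card_edgeFinset_induce_compl_singleton_add_degree (v : V) :
    #(G.induce {v}ᶜ).edgeFinset + G.degree v = #G.edgeFinset := by
  rw [card_edgeFinset_induce_compl_singleton, card_edgeFinset_deleteIncidenceSet]
  exact Nat.sub_add_cancel <|
    card_incidenceFinset_eq_degree G v ▸ card_le_card (G.incidenceFinset_subset v)

theorem card_filter_adj_compl_singleton (v : V) :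
    #{w : ({v}ᶜ : Set V) | G.Adj v w} = G.degree v := by
  rw [← card_neighborFinset_eq_degree, ← card_map (Function.Embedding.subtype _)]
  congr 1
  ext w
  simpa using fun h : G.Adj v w => h.ne.symm

theorem exists_two_mul_degree_lt_card (h3 : G.CliqueFree 3) (h2 : ¬ G.Colorable 2) :
    ∃ v, 2 * G.degree v < card V := by
  by_contra! hdeg
  obtain ⟨u, w, huw⟩ : ∃ u w, G.Adj u w := by
    by_contra! hno
    exact h2 ⟨Coloring.mk (fun _ => 0) fun h => absurd h (hno _ _)⟩
  have hdisj : Disjoint (G.neighborFinset u) (G.neighborFinset w) := by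
    rw [Finset.disjoint_left]
    intro x hxu hxw
    exact not_adj_of_cliqueFree_three h3 ((mem_neighborFinset _ _ _).1 hxu) huw
      ((mem_neighborFinset _ _ _).1 hxw).symm
  have hcover : G.neighborFinset u ∪ G.neighborFinset w = univ := by
    rw [← card_eq_iff_eq_univ]
    refine le_antisymm (card_le_univ _) ?_
    rw [card_union_of_disjoint hdisj, card_neighborFinset_eq_degree, card_neighborFinset_eq_degree]
    linarith [hdeg u, hdeg w]
  have hmem : ∀ x, x ∈ G.neighborSet u ∨ x ∈ G.neighborSet w := fun x => by
    simpa using eq_univ_iff_forall.1 hcover x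
  refine h2 (IsBipartiteWith.isBipartite (s := G.neighborSet u) (t := G.neighborSet w)
    ⟨by simpa [← coe_neighborFinset] using hdisj, fun x y hxy => ?_⟩)
  rcases hmem x with hx | hx <;> rcases hmem y with hy | hy
  · exact absurd hxy (not_adj_of_cliqueFree_three h3 hx hy)
  · exact Or.inl ⟨hx, hy⟩
  · exact Or.inr ⟨hx, hy⟩
  · exact absurd hxy (not_adj_of_cliqueFree_three h3 hx hy)

theorem card_edgeFinset_le_of_colorable_induce_compl_singleton (h3 : G.CliqueFree 3)
    (h2 : ¬ G.Colorable 2) (v : V) (hcol : (G.induce {v}ᶜ).Colorable 2) :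
    #G.edgeFinset ≤ (card V - 1) ^ 2 / 4 + 1 := by
  obtain ⟨c⟩ := hcol
  let s : Finset ({v}ᶜ : Set V) := {w | c w = 0}
  let N : Finset ({v}ᶜ : Set V) := {w | G.Adj v w}
  let P := N.filter (c · = 0)
  let Q := N.filter (c · ≠ 0)
  have hP : P.Nonempty := by
    by_contra! hP
    refine h2 (colorable_of_induce_compl_singleton c 0 fun w hw hcw => ?_)
    exact Finset.eq_empty_iff_forall_notMem.1 hP w (by simp [P, N, hw, hcw])
  have hQ : Q.Nonempty := by
    by_contra! hQ
    refine h2 (colorable_of_induce_compl_singleton c 1 fun w hw hcw => ?_)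
    exact Finset.eq_empty_iff_forall_notMem.1 hQ w (by simp [Q, N, hw, hcw])
  have hPQ : ∀ x ∈ P, ∀ y ∈ Q, ¬ (G.induce {v}ᶜ).Adj x y := fun x hx y hy =>
    not_adj_of_cliqueFree_three h3 (mem_filter.1 (mem_filter.1 hx).1).2
      (mem_filter.1 (mem_filter.1 hy).1).2
  have hedge : #(G.induce {v}ᶜ).edgeFinset + #P * #Q ≤ #s * #sᶜ :=
    c.isBipartiteWith_filter_eq_zero.card_edgeFinset_add_mul_le (by intro w; simp [P])
      (by intro w; simp [Q]) hPQ
  have hdeg : #P + #Q = G.degree v := by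
    rw [card_filter_add_card_filter_not, card_filter_adj_compl_singleton]
  have hs : #s + #sᶜ = card V - 1 := by
    rw [card_add_card_compl, card_compl_singleton]
  have hamgm : #s * #sᶜ ≤ (card V - 1) ^ 2 / 4 := by
    rw [Nat.le_div_iff_mul_le four_pos, ← hs]
    nlinarith [four_mul_le_sq_add #s #sᶜ]
  have hPQ1 : #P + #Q ≤ #P * #Q + 1 := by
    nlinarith [hP.card_pos, hQ.card_pos]
  rw [← card_edgeFinset_induce_compl_singleton_add_degree v]
  omega

end

theorem card_edgeFinset_le_of_cliqueFree_three_of_not_colorable_two [Fintype V] [DecidableEq V]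
    [DecidableRel G.Adj] (h3 : G.CliqueFree 3) (h2 : ¬ G.Colorable 2) :
    #G.edgeFinset ≤ (card V - 1) ^ 2 / 4 + 1 := by
  induction hV : card V using Nat.strong_induction_on generalizing V with
  | _ m ih =>
  subst hV
  obtain ⟨v, hv⟩ := exists_two_mul_degree_lt_card h3 h2
  by_cases hcol : (G.induce {v}ᶜ).Colorable 2
  · exact card_edgeFinset_le_of_colorable_induce_compl_singleton h3 h2 v hcol
  have hind := ih _ (by rw [card_compl_singleton]; omega) (G := G.induce {v}ᶜ)
    (h3.comap ⟨(Embedding.induce _).toCopy⟩) hcol rfl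
  have hsq := Nat.sub_one_sq_div_four_add_div_two (card V - 1)
  rw [card_compl_singleton] at hind
  rw [← card_edgeFinset_induce_compl_singleton_add_degree v]
  omega

theorem card_edgeFinset_induce_le_card_cliqueFinset_three [Fintype V] [DecidableEq V]
    [DecidableRel G.Adj] {v : V} {S : Set V} [DecidablePred (· ∈ S)]
    (hS : ∀ w ∈ S, G.Adj v w) : #(G.induce S).edgeFinset ≤ #(G.cliqueFinset 3) := by
  have hv : ∀ e : Sym2 S, v ∉ e.toFinset.map (Function.Embedding.subtype _) := by
    intro e he
    obtain ⟨w, -, rfl⟩ := mem_map.1 he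
    exact (hS w w.2).ne rfl
  refine card_le_card_of_injOn (fun e => insert v (e.toFinset.map (Function.Embedding.subtype _)))
    (fun e he => ?_) (fun e₁ _ e₂ _ he => ?_)
  · induction e with
    | _ a b =>
    rw [mem_coe, mem_edgeFinset, mem_edgeSet] at he
    simp only [mem_coe, Sym2.toFinset_mk_eq, map_insert, map_singleton,
      Function.Embedding.subtype_apply, mem_cliqueFinset_iff, is3Clique_triple_iff]
    exact ⟨hS a a.2, hS b b.2, he⟩
  · have := congrArg (Finset.erase · v) he
    simp only [erase_insert (hv _), map_inj] at this
    exact Sym2.ext fun x => by rw [← Sym2.mem_toFinset, this, Sym2.mem_toFinset]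

end SimpleGraph

/-- If `G` is a graph on `n ≥ 3` vertices with `⌊n²/4⌋ + 1` edges, some vertex `v₀` lies in
every triangle of `G`, and `G` has at most `n − 3` triangles, then `G − v₀` is bipartite
(i.e. 2-colorable). -/
theorem delete_cover_vertex_bipartite (n : ℕ) (hn : 3 ≤ n)
    (G : SimpleGraph (Fin n)) [DecidableRel G.Adj]
    (hE : G.edgeFinset.card = n ^ 2 / 4 + 1) (v₀ : Fin n)
    (hcov : ∀ t ∈ G.cliqueFinset 3, v₀ ∈ t)
    (hT : (G.cliqueFinset 3).card ≤ n - 3) :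
    (G.induce ({v₀}ᶜ : Set (Fin n))).Colorable 2 := by
  by_contra h2
  obtain ⟨j, rfl⟩ : ∃ j, n = j + 2 := ⟨n - 2, by omega⟩
  have h3 := cliqueFree_induce_compl_singleton (n := 3) fun t ht =>
    hcov t (mem_cliqueFinset_iff.2 ht)
  have hH := card_edgeFinset_le_of_cliqueFree_three_of_not_colorable_two h3 h2
  rw [Fintype.card_compl_singleton, Fintype.card_fin, show j + 2 - 1 - 1 = j by omega] at hH
  have hsplit := card_edgeFinset_induce_compl_singleton_add_degree (G := G) v₀
  have hdeg := G.degree_lt_card_verts v₀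
  rw [Fintype.card_fin] at hdeg
  have hsq : (j + 2) ^ 2 / 4 = j ^ 2 / 4 + j + 1 := by ring_nf; omega
  have huniv : G.IsUniversal v₀ := by
    rw [← degree_eq_card_sub_one, Fintype.card_fin]
    omega
  have htri := card_edgeFinset_induce_le_card_cliqueFinset_three (S := {v₀}ᶜ)
    fun w hw => huniv (Ne.symm hw)
  have hj : 4 * j ≤ j ^ 2 + 4 := by nlinarith [sq_nonneg ((j : ℤ) - 2)]
  omega
end
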